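/- arXiv:2107.02223 — 4 statements merged into one kernel-verified Lean document; each statement's English description precedes it below -/
import Mathlib

section
/- Let M be a Hadamard manifold and △ := {(x,x) : x ∈ M}. The function b : M × (M \ △) × M → ℝ given by b(x, z, y) = b_{γ_{x,z}}(y), where γ_{x,z} is the geodesic ray starting at x and passing through z and b_{γ_{x,z}} is its Busemann function, is upper semicontinuous. -/
/-! For `x ≠ z` the function `t ↦ d(y, γ_{x,z}(t)) - t` is antitone and bounded below by
`-d(x, y)` on `t ≥ 0`, so `b(x, z, y)` is its infimum over `t ≥ 0`. For fixed `t` each of these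
functions is continuous in `(x, z, y)`, because `γ_{x,z}(t) = exp_x ((t / d(x, z)) • log_x z)`
and `log` is jointly continuous: it inverts the continuous family `exp`, and
`‖log_x z‖ = d(x, z)` confines it to a compact set, on which `exp` pins down every cluster point.
An infimum of continuous functions is upper semicontinuous. -/

open Set Filter

universe u v

/-- An axiomatic model of an `n`-dimensional Hadamard manifold: a complete (proper) metric
space `M` (with `dist` the Riemannian distance) in which every pair of points `x, y` is joined
by a unique minimizing geodesic `geo x y : ℝ → M` (`geo x y t = exp_x (t • exp_x⁻¹ y)`),
satisfying the nonpositive-curvature comparison inequalities, in which every pair of distinct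
points `z, x` determines a unique unit-speed geodesic ray `ray z x` starting at `z` and passing
through `x`, and in which, for each point `x`, the exponential map
`exp x : T_xM ≃ ℝⁿ → M` is a homeomorphism with inverse `log x` satisfying
`dist x y = ‖log x y‖`, jointly continuous in the footpoint (the tangent bundle `TM` with its
Sasaki metric being globally trivialized as `M × ℝⁿ`). Euclidean space `ℝⁿ` is a model, so the
axioms are consistent. -/
class Hadamard (n : ℕ) (M : Type u) extends MetricSpace M where
  geo : M → M → ℝ → M
  geo_zero : ∀ x y : M, geo x y 0 = x
  geo_one : ∀ x y : M, geo x y 1 = y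
  geo_dist : ∀ x y : M, ∀ s ∈ Set.Icc (0:ℝ) 1, ∀ t ∈ Set.Icc (0:ℝ) 1,
    dist (geo x y s) (geo x y t) = |s - t| * dist x y
  geo_unique : ∀ x y z : M, ∀ t ∈ Set.Icc (0:ℝ) 1,
    dist x z = t * dist x y → dist z y = (1 - t) * dist x y → z = geo x y t
  dist_convex : ∀ x y x' y' : M, ∀ t ∈ Set.Icc (0:ℝ) 1,
    dist (geo x y t) (geo x' y' t) ≤ (1 - t) * dist x x' + t * dist y y'
  cn_ineq : ∀ x y p : M, ∀ t ∈ Set.Icc (0:ℝ) 1,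
    dist (geo x y t) p ^ 2 ≤
      (1 - t) * dist x p ^ 2 + t * dist y p ^ 2 - t * (1 - t) * dist x y ^ 2
  ray : M → M → ℝ → M
  ray_zero : ∀ z x : M, z ≠ x → ray z x 0 = z
  ray_through : ∀ z x : M, z ≠ x → ray z x (dist z x) = x
  ray_isom : ∀ z x : M, z ≠ x → ∀ s ∈ Set.Ici (0:ℝ), ∀ t ∈ Set.Ici (0:ℝ),
    dist (ray z x s) (ray z x t) = |s - t|
  exp : M → EuclideanSpace ℝ (Fin n) → M
  log : M → M → EuclideanSpace ℝ (Fin n)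
  exp_log : ∀ x y : M, exp x (log x y) = y
  log_exp : ∀ (x : M) (v : EuclideanSpace ℝ (Fin n)), log x (exp x v) = v
  dist_log : ∀ x y : M, dist x y = ‖log x y‖
  exp_continuous : Continuous fun p : M × EuclideanSpace ℝ (Fin n) => exp p.1 p.2
  geo_exp : ∀ (x y : M) (t : ℝ), geo x y t = exp x (t • log x y)
  properSpace : ProperSpace M

/-- A set `D` in a Hadamard manifold is convex if for any `x, y ∈ D` the geodesic segment
`γ_{x,y}([0,1])` is contained in `D`. -/
def GConvex (n : ℕ) {M : Type u} [Hadamard n M] (D : Set M) : Prop :=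
  ∀ x ∈ D, ∀ y ∈ D, ∀ t ∈ Set.Icc (0:ℝ) 1, Hadamard.geo n x y t ∈ D

/-- A function `f` is convex on a convex set `D` if
`f (γ_{x,y}(t)) ≤ (1 - t) * f x + t * f y` for all `x, y ∈ D`, `t ∈ [0,1]`. -/
def GConvexOn (n : ℕ) {M : Type u} [Hadamard n M] (D : Set M) (f : M → ℝ) : Prop :=
  ∀ x ∈ D, ∀ y ∈ D, ∀ t ∈ Set.Icc (0:ℝ) 1,
    f (Hadamard.geo n x y t) ≤ (1 - t) * f x + t * f y

/-- The convex hull of `B`: the smallest convex subset of `M` containing `B`. -/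
def ghull (n : ℕ) {M : Type u} [Hadamard n M] (B : Set M) : Set M :=
  ⋂₀ {C : Set M | GConvex n C ∧ B ⊆ C}

/-- The Busemann function of the geodesic ray starting at `z` and passing through `x`,
evaluated at `y`:  `b_{γ_{z,x}}(y) = lim_{t → ∞} (d (y, γ_{z,x}(t)) - t)`
(junk value if the limit does not exist, e.g. if `z = x`). -/
noncomputable def busemann (n : ℕ) {M : Type u} [Hadamard n M] (z x y : M) : ℝ :=
  limUnder atTop fun t : ℝ => dist y (Hadamard.ray n z x t) - t

namespace Hadamard

open Topology Metric

variable {n : ℕ} {M : Type u} [Hadamard n M]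

theorem continuous_log : Continuous fun p : M × M => log (n := n) p.1 p.2 := by
  refine continuous_iff_continuousAt.2 fun a => ?_
  have hbounded : ∀ᶠ q in 𝓝 a, log (n := n) q.1 q.2 ∈ closedBall 0 (dist a.1 a.2 + 1) := by
    have hdist : Tendsto (fun q : M × M => dist q.1 q.2) (𝓝 a) (𝓝 (dist a.1 a.2)) :=
      (continuous_fst.dist continuous_snd).tendsto a
    filter_upwards [hdist.eventually (eventually_le_nhds (lt_add_one _))] with q hq
    rwa [mem_closedBall_zero_iff, ← dist_log]
  refine (isCompact_closedBall _ _).tendsto_nhds_of_unique_mapClusterPt hbounded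
    fun v _ hv => ?_
  -- Along the filter where `q → a` and `log q → v`, `exp q.1 (log q) = q.2` tends both to
  -- `exp a.1 v` and to `a.2`.
  set G := comap (fun q : M × M => log (n := n) q.1 q.2) (𝓝 v) ⊓ 𝓝 a
  have : G.NeBot := neBot_inf_comap_iff_map'.2 hv.neBot
  have hexp : Tendsto (fun q : M × M => exp q.1 (log (n := n) q.1 q.2)) G (𝓝 (exp a.1 v)) :=
    (exp_continuous.tendsto (a.1, v)).comp
      (((continuous_fst.tendsto a).mono_left inf_le_right).prodMk_nhds
        (tendsto_comap.mono_left inf_le_left))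
  have hsnd : Tendsto (fun q : M × M => exp q.1 (log (n := n) q.1 q.2)) G (𝓝 a.2) := by
    simpa only [exp_log] using (continuous_snd.tendsto a).mono_left inf_le_right
  rw [← log_exp a.1 v, tendsto_nhds_unique hexp hsnd]

theorem log_eq_smul_of_dist_add_dist_eq {z w y : M} (hzy : z ≠ y)
    (hw : dist z w + dist w y = dist z y) :
    log (n := n) z w = (dist z w / dist z y) • log (n := n) z y := by
  have hd : 0 < dist z y := dist_pos.2 hzy
  have hs : dist z w / dist z y ∈ Icc (0 : ℝ) 1 :=
    ⟨by positivity, (div_le_one hd).2 (by linarith [dist_nonneg (x := w) (y := y)])⟩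
  have hgeo : w = geo n z y (dist z w / dist z y) :=
    geo_unique z y w _ hs (by field_simp) (by field_simp; linarith)
  conv_lhs => rw [hgeo, geo_exp, log_exp]

theorem dist_ray_left {z x : M} (h : z ≠ x) {t : ℝ} (ht : 0 ≤ t) :
    dist z (ray n z x t) = t := by
  have := ray_isom (n := n) z x h 0 self_mem_Ici t ht
  rwa [ray_zero z x h, zero_sub, abs_neg, abs_of_nonneg ht] at this

theorem ray_eq_exp {z x : M} (h : z ≠ x) {t : ℝ} (ht : 0 ≤ t) :
    ray n z x t = exp z ((t / dist z x) • log (n := n) z x) := by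
  have hd : 0 < dist z x := dist_pos.2 h
  have hdx : dist x (ray n z x t) = |dist z x - t| := by
    simpa only [ray_through z x h] using ray_isom (n := n) z x h _ hd.le t ht
  rcases le_total t (dist z x) with hle | hle
  · -- the ray point lies between `z` and `x`
    have hlog := log_eq_smul_of_dist_add_dist_eq (n := n) h (w := ray n z x t) (by
      rw [dist_ray_left (n := n) h ht, dist_comm, hdx, abs_of_nonneg (sub_nonneg.2 hle)]; ring)
    conv_rhs => rw [← dist_ray_left (n := n) h ht, ← hlog, exp_log]
  · -- `x` lies between `z` and the ray point
    have hzw : z ≠ ray n z x t := fun hzw => by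
      linarith [dist_ray_left (n := n) h ht, dist_eq_zero.2 hzw]
    have hlog := log_eq_smul_of_dist_add_dist_eq (n := n) hzw (w := x) (by
      rw [dist_ray_left (n := n) h ht, hdx, abs_of_nonpos (sub_nonpos.2 hle)]; ring)
    rw [hlog, dist_ray_left (n := n) h ht, smul_smul, div_mul_div_comm, mul_comm t,
      div_self (mul_pos hd (hd.trans_le hle)).ne', one_smul, exp_log]

theorem continuousOn_ray {t : ℝ} (ht : 0 ≤ t) :
    ContinuousOn (fun p : M × M => ray n p.1 p.2 t) {p | p.1 ≠ p.2} := by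
  have hdist : ContinuousOn (fun p : M × M => t / dist p.1 p.2) {p | p.1 ≠ p.2} :=
    continuousOn_const.div (continuous_fst.dist continuous_snd).continuousOn
      fun p hp => dist_ne_zero.2 hp
  refine (exp_continuous.comp_continuousOn
    (continuous_fst.continuousOn.prodMk (hdist.smul continuous_log.continuousOn))).congr
    fun p hp => ray_eq_exp hp ht

theorem antitone_dist_ray_sub {z x : M} (h : z ≠ x) (y : M) :
    Antitone fun t : Ici (0 : ℝ) => dist y (ray n z x t) - t := by
  rintro ⟨s, hs⟩ ⟨t, ht⟩ (hst : s ≤ t)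
  have hray := ray_isom (n := n) z x h s hs t ht
  rw [abs_of_nonpos (sub_nonpos.2 hst)] at hray
  linarith [dist_triangle y (ray n z x s) (ray n z x t)]

theorem bddBelow_range_dist_ray_sub {z x : M} (h : z ≠ x) (y : M) :
    BddBelow (range fun t : Ici (0 : ℝ) => dist y (ray n z x t) - t) := by
  refine ⟨-dist z y, ?_⟩
  rintro _ ⟨⟨t, ht⟩, rfl⟩
  linarith [dist_triangle z y (ray n z x t), dist_ray_left (n := n) h ht]

theorem busemann_eq_iInf {z x : M} (h : z ≠ x) (y : M) :
    busemann n z x y = ⨅ t : Ici (0 : ℝ), (dist y (ray n z x t) - t) := by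
  refine Tendsto.limUnder_eq ?_
  rw [← map_val_Ici_atTop (0 : ℝ), tendsto_map'_iff]
  exact tendsto_atTop_ciInf (antitone_dist_ray_sub h y) (bddBelow_range_dist_ray_sub h y)

end Hadamard

/-- In a Hadamard manifold `M`, the function
`b(x, z, y) = b_{γ_{x,z}}(y)` (the Busemann function of the geodesic ray starting at `x`
and passing through `z`, evaluated at `y`) is upper semicontinuous on
`M × (M \ △) × M`, i.e. on the set of triples `(x, z, y)` with `x ≠ z`. -/
theorem busemann_upperSemicontinuous {n : ℕ} {M : Type u} [Hadamard n M] :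
    UpperSemicontinuousOn (fun p : M × M × M => busemann n p.1 p.2.1 p.2.2)
      {p : M × M × M | p.1 ≠ p.2.1} := by
  have hinf : UpperSemicontinuousOn
      (fun p : M × M × M => ⨅ t : Ici (0 : ℝ), (dist p.2.2 (Hadamard.ray n p.1 p.2.1 t) - t))
      {p : M × M × M | p.1 ≠ p.2.1} := by
    refine upperSemicontinuousOn_ciInf
      (fun p hp => Hadamard.bddBelow_range_dist_ray_sub hp p.2.2) fun t => ?_
    have hray :
        ContinuousOn (fun p : M × M × M => Hadamard.ray n p.1 p.2.1 t) {p | p.1 ≠ p.2.1} :=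
      (Hadamard.continuousOn_ray (n := n) t.2).comp
        (continuous_fst.prodMk continuous_snd.fst).continuousOn fun _ hp => hp
    exact ((continuous_dist.comp_continuousOn
      (continuous_snd.snd.continuousOn.prodMk hray)).sub continuousOn_const).upperSemicontinuousOn
  exact fun p hp => UpperSemicontinuousWithinAt.congr_of_eventuallyEq (hinf p hp) hp
    (eventually_nhdsWithin_of_forall fun q hq => (Hadamard.busemann_eq_iInf (n := n) hq q.2.2).symm)
end

section
/- Let M be a Hadamard manifold, D ⊆ M a nonempty convex set, and f : D → ℝ a convex function. For any N ∈ ℕ, points x_1, …, x_N ∈ D and weights α_1, …, α_N ≥ 0 with ∑_{i=1}^N α_i = 1, the pseudo-convex combination y_N = ∑_{i=1}^N α_i x_i satisfies the Jensen inequality f(∑_{i=1}^N α_i x_i) ≤ ∑_{i=1}^N α_i f(x_i). -/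
open Set Filter

universe u v

/-- The pseudo-convex combination `∑_{i=1}^{N} α_i x_i` (with points and weights indexed
from `0`): `y_0 = x_0` and `y_k = γ_{y_{k-1}, x_k}(α_k / (α_0 + ⋯ + α_k))`, with the
convention that the parameter is `0` when the denominator vanishes.  The combination of
`x_1, …, x_N` of the paper is `pcc n x α (N - 1)`. -/
noncomputable def pcc (n : ℕ) {M : Type u} [Hadamard n M] (x : ℕ → M) (α : ℕ → ℝ) :
    ℕ → M
  | 0 => x 0
  | k + 1 =>
      Hadamard.geo n (pcc n x α k) (x (k + 1))
        (if (∑ i ∈ Finset.range (k + 2), α i) = 0 then 0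
         else α (k + 1) / ∑ i ∈ Finset.range (k + 2), α i)

/-!
Writing `S_k = α_0 + ⋯ + α_k`, the step from `y_k` to `y_{k+1}` moves along the geodesic from
`y_k` to `x_{k+1}` by the fraction `α_{k+1} / S_{k+1}`, so convexity of `f` along it gives
`S_{k+1} f(y_{k+1}) ≤ S_k f(y_k) + α_{k+1} f(x_{k+1})`. By induction
`S_k f(y_k) ≤ ∑_{i ≤ k} α_i f(x_i)`, and `S_{N-1} = 1`.
-/

section Jensen

variable {n : ℕ} {M : Type u} [Hadamard n M] {D : Set M} {f : M → ℝ}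

lemma ite_div_mem_Icc {b s : ℝ} (hb : 0 ≤ b) (hbs : b ≤ s) :
    (if s = 0 then 0 else b / s) ∈ Icc (0 : ℝ) 1 := by
  split_ifs with hs
  · exact ⟨le_rfl, zero_le_one⟩
  · exact ⟨div_nonneg hb (hb.trans hbs), div_le_one_of_le₀ hbs (hb.trans hbs)⟩

lemma GConvexOn.mul_apply_geo_le (hf : GConvexOn n D f) {p q : M} (hp : p ∈ D) (hq : q ∈ D)
    {b s : ℝ} (hb : 0 ≤ b) (hbs : b ≤ s) :
    s * f (Hadamard.geo n p q (if s = 0 then 0 else b / s)) ≤ (s - b) * f p + b * f q := by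
  have hconv := hf p hp q hq _ (ite_div_mem_Icc hb hbs)
  split_ifs at hconv ⊢ with hs
  · obtain rfl : b = 0 := le_antisymm (hbs.trans hs.le) hb
    simp [hs]
  · have hs_pos : 0 < s := lt_of_le_of_ne (hb.trans hbs) (Ne.symm hs)
    calc s * f (Hadamard.geo n p q (b / s))
        ≤ s * ((1 - b / s) * f p + b / s * f q) := mul_le_mul_of_nonneg_left hconv hs_pos.le
      _ = (s - b) * f p + b * f q := by field_simp

lemma pcc_succ (x : ℕ → M) (α : ℕ → ℝ) (k : ℕ) :
    pcc n x α (k + 1) =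
      Hadamard.geo n (pcc n x α k) (x (k + 1))
        (if (∑ i ∈ Finset.range (k + 2), α i) = 0 then 0
         else α (k + 1) / ∑ i ∈ Finset.range (k + 2), α i) :=
  rfl

lemma pcc_mem (hD : GConvex n D) {x : ℕ → M} {α : ℕ → ℝ} {k : ℕ}
    (hx : ∀ i ≤ k, x i ∈ D) (hα : ∀ i ≤ k, 0 ≤ α i) : pcc n x α k ∈ D := by
  induction k with
  | zero => exact hx 0 le_rfl
  | succ k ih =>
    rw [pcc_succ]
    exact hD _ (ih (fun i hi => hx i (by omega)) (fun i hi => hα i (by omega))) _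
      (hx _ le_rfl) _ (ite_div_mem_Icc (hα _ le_rfl)
        (Finset.single_le_sum (fun i hi => hα i (by simp at hi; omega)) (by simp)))

/-- Weighting by the partial mass instead of normalising it keeps the induction free of
divisions by partial sums, which may vanish. -/
lemma GConvexOn.sum_mul_apply_pcc_le (hD : GConvex n D) (hf : GConvexOn n D f)
    {x : ℕ → M} {α : ℕ → ℝ} {k : ℕ} (hx : ∀ i ≤ k, x i ∈ D) (hα : ∀ i ≤ k, 0 ≤ α i) :
    (∑ i ∈ Finset.range (k + 1), α i) * f (pcc n x α k) ≤
      ∑ i ∈ Finset.range (k + 1), α i * f (x i) := by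
  induction k with
  | zero => simp [pcc]
  | succ k ih =>
    have hx' : ∀ i ≤ k, x i ∈ D := fun i hi => hx i (by omega)
    have hα' : ∀ i ≤ k, 0 ≤ α i := fun i hi => hα i (by omega)
    have hS : ∑ i ∈ Finset.range (k + 2), α i = ∑ i ∈ Finset.range (k + 1), α i + α (k + 1) :=
      Finset.sum_range_succ _ _
    have hstep := hf.mul_apply_geo_le (pcc_mem hD hx' hα') (hx _ le_rfl) (hα _ le_rfl)
      (s := ∑ i ∈ Finset.range (k + 2), α i)
      (Finset.single_le_sum (fun i hi => hα i (by simp at hi; omega)) (by simp))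
    rw [hS, add_sub_cancel_right] at hstep
    rw [pcc_succ, hS, Finset.sum_range_succ (fun i => α i * f (x i))]
    linarith [ih hx' hα']

end Jensen

theorem jensen_pcc_general {n : ℕ} {M : Type u} [Hadamard n M]
    {D : Set M} (hD : GConvex n D)
    {f : M → ℝ} (hf : GConvexOn n D f)
    {N : ℕ} (x : ℕ → M) (hx : ∀ i < N, x i ∈ D)
    (α : ℕ → ℝ) (hα : ∀ i < N, 0 ≤ α i)
    (hsum : ∑ i ∈ Finset.range N, α i = 1) :
    f (pcc n x α (N - 1)) ≤ ∑ i ∈ Finset.range N, α i * f (x i) := by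
  cases N with
  | zero => simp at hsum
  | succ N =>
    have h := hf.sum_mul_apply_pcc_le (k := N) hD (fun i hi => hx i (by omega))
      (fun i hi => hα i (by omega))
    rwa [hsum, one_mul] at h

/-- **Jensen's inequality for pseudo-convex combinations.**
Let `M` be a Hadamard manifold, `D ⊆ M` nonempty convex, and `f : D → ℝ` convex. For any
`N ≥ 1`, points `x_0, …, x_{N-1} ∈ D` and weights `α_i ≥ 0` with `∑ α_i = 1`, the
pseudo-convex combination `y_N = ∑ α_i x_i` satisfies
`f (∑ α_i x_i) ≤ ∑ α_i f(x_i)`. -/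
theorem jensen_pcc {n : ℕ} {M : Type u} [Hadamard n M]
    {D : Set M} (hne : D.Nonempty) (hD : GConvex n D)
    {f : M → ℝ} (hf : GConvexOn n D f)
    {N : ℕ} (hN : 0 < N) (x : ℕ → M) (hx : ∀ i < N, x i ∈ D)
    (α : ℕ → ℝ) (hα : ∀ i < N, 0 ≤ α i)
    (hsum : ∑ i ∈ Finset.range N, α i = 1) :
    f (pcc n x α (N - 1)) ≤ ∑ i ∈ Finset.range N, α i * f (x i) :=
  jensen_pcc_general hD hf x hx α hα hsum
end

section
/- Let M be an n-dimensional Hadamard manifold, Ω ⊆ M a nonempty closed convex set, and F : Ω × Ω → ℝ a bifunction with F(x,x) = 0 for all x ∈ Ω. Assume F is pseudomonotone (F(x,y) ≥ 0 implies F(y,x) ≤ 0) and that for every y ∈ Ω the set {x ∈ Ω : F(y,x) < 0} is convex. Fix z_0 ∈ M, k ∈ ℕ, and set Ω_k := {x ∈ Ω : d(x,z_0) ≤ k} and L_F(k,y) := {x ∈ Ω_k : F(y,x) ≤ 0}. Then for any y_1, …, y_{n+1} ∈ Ω_k, co({y_1,…,y_{n+1}}) ⊆ ∪_{i=1}^{n+1}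 L_F(k, y_i). -/
open Set Filter

universe u v

/-! If `x ∈ Ω` lies in the hull of the `y i` but `F (y i) x > 0` for every `i`, pseudomonotonicity
gives `F x (y i) < 0`, so every `y i` lies in the convex set `{w ∈ Ω | F x w < 0}`; hence so does
`x`, contradicting `F x x = 0`. That the hull lies in `Ω_k` is the convexity of closed balls. -/

namespace Hadamard

variable {n : ℕ} {M : Type u} [Hadamard n M]

theorem geo_self (z : M) {t : ℝ} (ht : t ∈ Icc (0 : ℝ) 1) : geo n z z t = z := by
  have h := geo_dist (n := n) z z 0 ⟨le_rfl, zero_le_one⟩ t ht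
  rw [geo_zero, dist_self, mul_zero] at h
  exact (dist_eq_zero.mp h).symm

end Hadamard

section GConvex

variable {n : ℕ} {M : Type u} [Hadamard n M]

theorem GConvex.inter {s t : Set M} (hs : GConvex n s) (ht : GConvex n t) :
    GConvex n (s ∩ t) :=
  fun a ha b hb r hr => ⟨hs a ha.1 b hb.1 r hr, ht a ha.2 b hb.2 r hr⟩

theorem gconvex_closedBall (z : M) (r : ℝ) : GConvex n (Metric.closedBall z r) := by
  intro a ha b hb t ht
  rw [Metric.mem_closedBall] at ha hb ⊢
  calc dist (Hadamard.geo n a b t) z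
      = dist (Hadamard.geo n a b t) (Hadamard.geo n z z t) := by rw [Hadamard.geo_self z ht]
    _ ≤ (1 - t) * dist a z + t * dist b z := Hadamard.dist_convex a b z z t ht
    _ ≤ (1 - t) * r + t * r := by gcongr <;> linarith [ht.1, ht.2]
    _ = r := by ring

theorem ghull_subset {B C : Set M} (hC : GConvex n C) (hBC : B ⊆ C) : ghull n B ⊆ C :=
  sInter_subset_of_mem ⟨hC, hBC⟩

theorem exists_nonpos_of_mem_ghull_of_pseudomonotone {Ω : Set M} {F : M → M → ℝ}
    (hdiag : ∀ x ∈ Ω, F x x = 0) (hpm : ∀ x ∈ Ω, ∀ y ∈ Ω, 0 ≤ F x y → F y x ≤ 0)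
    (hqc : ∀ y ∈ Ω, GConvex n {x | x ∈ Ω ∧ F y x < 0})
    {ι : Type*} {y : ι → M} (hy : ∀ i, y i ∈ Ω) {x : M} (hxΩ : x ∈ Ω)
    (hx : x ∈ ghull n (range y)) : ∃ i, F (y i) x ≤ 0 := by
  by_contra! hpos
  have hsub : range y ⊆ {w | w ∈ Ω ∧ F x w < 0} := by
    rintro _ ⟨i, rfl⟩
    refine ⟨hy i, lt_of_not_ge fun h => ?_⟩
    exact (hpos i).not_ge (hpm x hxΩ (y i) (hy i) h)
  have hxx := (ghull_subset (hqc x hxΩ) hsub hx).2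
  linarith [hdiag x hxΩ]

end GConvex

theorem pseudomonotone_kkm_condition_general {n : ℕ} {M : Type u} [Hadamard n M]
    {Ω : Set M} (hconv : GConvex n Ω)
    (F : M → M → ℝ) (hdiag : ∀ x ∈ Ω, F x x = 0)
    (hpm : ∀ x ∈ Ω, ∀ y ∈ Ω, 0 ≤ F x y → F y x ≤ 0)
    (hqc : ∀ y ∈ Ω, GConvex n {x | x ∈ Ω ∧ F y x < 0})
    (z₀ : M) (k : ℕ)
    (y : Fin (n + 1) → M) (hy : ∀ i, y i ∈ Ω ∧ dist (y i) z₀ ≤ (k : ℝ)) :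
    ghull n (Set.range y) ⊆
      ⋃ i, {x | (x ∈ Ω ∧ dist x z₀ ≤ (k : ℝ)) ∧ F (y i) x ≤ 0} := by
  intro x hx
  have hxΩk : x ∈ Ω ∩ Metric.closedBall z₀ k :=
    ghull_subset (hconv.inter (gconvex_closedBall z₀ k))
      (by rintro _ ⟨i, rfl⟩; exact hy i) hx
  obtain ⟨i, hi⟩ := exists_nonpos_of_mem_ghull_of_pseudomonotone hdiag hpm hqc
    (fun i => (hy i).1) hxΩk.1 hx
  exact mem_iUnion.mpr ⟨i, hxΩk, hi⟩

/-- Let `M` be an `n`-dimensional Hadamard manifold, `Ω ⊆ M` nonempty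
closed convex and `F : Ω × Ω → ℝ` with `F(x,x) = 0`, pseudomonotone, and such that for
every `y ∈ Ω` the set `{x ∈ Ω : F(y,x) < 0}` is convex.  Fix `z₀ ∈ M`, `k ∈ ℕ`, and set
`Ω_k = {x ∈ Ω : d(x,z₀) ≤ k}` and `L_F(k,y) = {x ∈ Ω_k : F(y,x) ≤ 0}`.  Then for any
`y_1, …, y_{n+1} ∈ Ω_k`, `co({y_1, …, y_{n+1}}) ⊆ ∪_{i=1}^{n+1} L_F(k, y_i)`. -/
theorem pseudomonotone_kkm_condition {n : ℕ} {M : Type u} [Hadamard n M]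
    {Ω : Set M} (hne : Ω.Nonempty) (hcl : IsClosed Ω) (hconv : GConvex n Ω)
    (F : M → M → ℝ) (hdiag : ∀ x ∈ Ω, F x x = 0)
    (hpm : ∀ x ∈ Ω, ∀ y ∈ Ω, 0 ≤ F x y → F y x ≤ 0)
    (hqc : ∀ y ∈ Ω, GConvex n {x | x ∈ Ω ∧ F y x < 0})
    (z₀ : M) (k : ℕ)
    (y : Fin (n + 1) → M) (hy : ∀ i, y i ∈ Ω ∧ dist (y i) z₀ ≤ (k : ℝ)) :
    ghull n (Set.range y) ⊆
      ⋃ i, {x | (x ∈ Ω ∧ dist x z₀ ≤ (k : ℝ)) ∧ F (y i) x ≤ 0} :=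
  pseudomonotone_kkm_condition_general hconv F hdiag hpm hqc z₀ k y hy
end

section
/- Let M be a Hadamard manifold, Ω ⊆ M a nonempty closed convex set, F : Ω × Ω → ℝ a monotone bifunction with F(x,x) = 0 for all x ∈ Ω, λ > 0 and x ∈ M. Define F_{λ,x}(z,y) := λ F(z,y) + d(z,x) b_{γ_{z,x}}(y) for z, y ∈ Ω, where the second term is understood to be 0 when z = x. Then F_{λ,x} is monotone; more precisely, F_{λ,x}(z,y) + F_{λ,x}(y,z) ≤ −(d(z,x) − d(y,x))² for all z, y ∈ Ω. -/
/-!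
Along a unit-speed ray `γ`, the function `t ↦ d(y, γ t) - t` is nonincreasing (triangle
inequality) and bounded below, so its limit `b_γ(y)` is at most its value at any `t ≥ 0`.
Evaluating at the time `d(z, x)` where `γ_{z,x}` passes through `x` gives
`b_{γ_{z,x}}(y) ≤ d(y, x) - d(z, x)`. With `a = d(z, x)`, `b = d(y, x)` the two regularization
terms then sum to at most `a (b - a) + b (a - b) = -(a - b)²`, while `λ (F(z,y) + F(y,z)) ≤ 0`.
-/

open Set Filter

universe u v

theorem limUnder_le_of_antitoneOn {f : ℝ → ℝ} {a : ℝ} (hf : AntitoneOn f (Ici a))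
    (hbdd : BddBelow (f '' Ici a)) {t : ℝ} (ht : a ≤ t) : limUnder atTop f ≤ f t := by
  set g : ℝ → ℝ := fun s => f (max s a)
  have hg : Antitone g := fun s s' hss' =>
    hf (le_max_right s a) (le_max_right s' a) (max_le_max hss' le_rfl)
  have hgbdd : BddBelow (range g) :=
    hbdd.mono <| range_subset_iff.2 fun s => mem_image_of_mem f (le_max_right s a)
  have hfg : g =ᶠ[atTop] f := by
    filter_upwards [eventually_ge_atTop a] with s hs
    simp only [g, max_eq_left hs]
  have hlim : Tendsto f atTop (nhds (⨅ s, g s)) := (tendsto_atTop_ciInf hg hgbdd).congr' hfg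
  rw [hlim.limUnder_eq]
  exact le_of_tendsto hlim <| (eventually_ge_atTop t).mono fun s hs => hf ht (ht.trans hs) hs

section GeodesicRay

variable {X : Type*} [PseudoMetricSpace X] {γ : ℝ → X}

theorem antitoneOn_dist_sub_of_isometry_Ici
    (hγ : ∀ s ∈ Ici (0:ℝ), ∀ t ∈ Ici (0:ℝ), dist (γ s) (γ t) = |s - t|) (y : X) :
    AntitoneOn (fun t => dist y (γ t) - t) (Ici 0) := by
  intro s hs t ht hst
  have : dist y (γ t) ≤ dist y (γ s) + (t - s) := by
    calc dist y (γ t) ≤ dist y (γ s) + dist (γ s) (γ t) := dist_triangle _ _ _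
      _ = dist y (γ s) + (t - s) := by rw [hγ s hs t ht, abs_of_nonpos (by linarith)]; ring
  dsimp only
  linarith

theorem bddBelow_dist_sub_of_isometry_Ici
    (hγ : ∀ s ∈ Ici (0:ℝ), ∀ t ∈ Ici (0:ℝ), dist (γ s) (γ t) = |s - t|) (y : X) :
    BddBelow ((fun t => dist y (γ t) - t) '' Ici 0) := by
  refine ⟨-dist (γ 0) y, ?_⟩
  rintro _ ⟨t, ht, rfl⟩
  have hdist : dist (γ 0) (γ t) = t := by
    rw [hγ 0 self_mem_Ici t ht, zero_sub, abs_neg, abs_of_nonneg ht]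
  have := dist_triangle (γ 0) y (γ t)
  dsimp only
  linarith

end GeodesicRay

section Busemann

variable {n : ℕ} {M : Type u} [Hadamard n M]

theorem busemann_le_dist_ray_sub {z x : M} (h : z ≠ x) (y : M) {t : ℝ} (ht : 0 ≤ t) :
    busemann n z x y ≤ dist y (Hadamard.ray n z x t) - t :=
  have hray := Hadamard.ray_isom (n := n) z x h
  limUnder_le_of_antitoneOn (antitoneOn_dist_sub_of_isometry_Ici hray y)
    (bddBelow_dist_sub_of_isometry_Ici hray y) ht

theorem busemann_le_dist_sub_dist {z x : M} (h : z ≠ x) (y : M) :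
    busemann n z x y ≤ dist y x - dist z x := by
  simpa only [Hadamard.ray_through (n := n) z x h] using
    busemann_le_dist_ray_sub (n := n) h y (dist_nonneg (x := z) (y := x))

theorem dist_mul_busemann_le (z x y : M) :
    dist z x * busemann n z x y ≤ dist z x * (dist y x - dist z x) := by
  rcases eq_or_ne z x with rfl | h
  · simp
  · exact mul_le_mul_of_nonneg_left (busemann_le_dist_sub_dist h y) dist_nonneg

end Busemann

theorem regularized_bifunction_monotone_general {n : ℕ} {M : Type u} [Hadamard n M]
    {Ω : Set M}
    (F : M → M → ℝ)
    (hmono : ∀ x ∈ Ω, ∀ y ∈ Ω, F x y + F y x ≤ 0)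
    {lam : ℝ} (hlam : 0 < lam) (x : M) :
    ∀ z ∈ Ω, ∀ y ∈ Ω,
      (lam * F z y + dist z x * busemann n z x y) +
        (lam * F y z + dist y x * busemann n y x z) ≤
      -(dist z x - dist y x) ^ 2 := by
  intro z hz y hy
  have hF : lam * (F z y + F y z) ≤ 0 := mul_nonpos_of_nonneg_of_nonpos hlam.le (hmono z hz y hy)
  linear_combination
    hF + dist_mul_busemann_le (n := n) z x y + dist_mul_busemann_le (n := n) y x z

/-- Let `M` be a Hadamard manifold, `Ω ⊆ M` nonempty closed convex,
`F : Ω × Ω → ℝ` a monotone bifunction with `F(x,x) = 0`, `λ > 0` and `x ∈ M`.  Then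
`F_{λ,x}(z,y) = λ F(z,y) + d(z,x) b_{γ_{z,x}}(y)` (the regularization term being `0`
when `z = x`, as then `d(z,x) = 0`) is monotone; more precisely
`F_{λ,x}(z,y) + F_{λ,x}(y,z) ≤ −(d(z,x) − d(y,x))²` for all `z, y ∈ Ω`. -/
theorem regularized_bifunction_monotone {n : ℕ} {M : Type u} [Hadamard n M]
    {Ω : Set M} (hne : Ω.Nonempty) (hcl : IsClosed Ω) (hconv : GConvex n Ω)
    (F : M → M → ℝ) (hdiag : ∀ x ∈ Ω, F x x = 0)
    (hmono : ∀ x ∈ Ω, ∀ y ∈ Ω, F x y + F y x ≤ 0)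
    {lam : ℝ} (hlam : 0 < lam) (x : M) :
    ∀ z ∈ Ω, ∀ y ∈ Ω,
      (lam * F z y + dist z x * busemann n z x y) +
        (lam * F y z + dist y x * busemann n y x z) ≤
      -(dist z x - dist y x) ^ 2 :=
  regularized_bifunction_monotone_general F hmono hlam x
end
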